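/- Let n, f, r be nonnegative integers with n ≥ 2f + 3r and n > f. Let μ ≥ γ > 0. Then ((n-f)γ - 2(f+r)μ)² ≤ ((n-f)² + 4(f+r)²)·μ², and consequently 1 - ((n-f)γ - 2(f+r)μ)²/((n-f)²μ² + 2(n-r)²μ²) ≥ 2(n + √2·f + (√2-1)·r)(n - √2·f - (1+√2)·r) / ((n-f)² + 2(n-r)²) > 0. -/

import Mathlib

/-! With `a = n - f`, `b = f + r`, `c = n - r`, the product of the two `√2`-factors is
`2c² - 4b²`, so the claimed lower bound is `1 - (a² + 4b²)/(a² + 2c²)`. It follows from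
`(aγ - 2bμ)² ≤ (a² + 4b²)μ²`, which holds because the cross term is nonpositive and `γ² ≤ μ²`;
positivity is `c ≥ 2b`, i.e. `n ≥ 2f + 3r`. -/

lemma sq_mul_sub_two_mul_le {a b γ μ : ℝ} (ha : 0 ≤ a) (hb : 0 ≤ b) (hγ : 0 ≤ γ)
    (hγμ : γ ≤ μ) :
    (a * γ - 2 * b * μ) ^ 2 ≤ (a ^ 2 + 4 * b ^ 2) * μ ^ 2 := by
  have hsq : a ^ 2 * γ ^ 2 ≤ a ^ 2 * μ ^ 2 := by gcongr
  have hcross : 0 ≤ a * b * γ * μ := by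
    have : 0 ≤ μ := hγ.trans hγμ
    positivity
  nlinarith

lemma two_mul_sqrt_two_factors_eq (n f r : ℝ) :
    2 * (n + √2 * f + (√2 - 1) * r) * (n - √2 * f - (1 + √2) * r) =
      2 * (n - r) ^ 2 - 4 * (f + r) ^ 2 := by
  linear_combination (-2 * (f + r) ^ 2) * Real.sq_sqrt (show (0 : ℝ) ≤ 2 by norm_num)

lemma two_sq_sub_four_sq_pos {b c : ℝ} (hb : 0 ≤ b) (hc : 0 < c) (hbc : 2 * b ≤ c) :
    0 < 2 * c ^ 2 - 4 * b ^ 2 := by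
  nlinarith

lemma one_sub_sq_div_ge {a b c γ μ : ℝ} (ha : 0 ≤ a) (hb : 0 ≤ b)
    (hD : 0 < a ^ 2 + 2 * c ^ 2) (hγ : 0 < γ) (hγμ : γ ≤ μ) :
    1 - (a * γ - 2 * b * μ) ^ 2 / (a ^ 2 * μ ^ 2 + 2 * c ^ 2 * μ ^ 2) ≥
      (2 * c ^ 2 - 4 * b ^ 2) / (a ^ 2 + 2 * c ^ 2) := by
  have hμ : 0 < μ ^ 2 := by have := hγ.trans_le hγμ; positivity
  have hsq := sq_mul_sub_two_mul_le ha hb hγ.le hγμ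
  calc (2 * c ^ 2 - 4 * b ^ 2) / (a ^ 2 + 2 * c ^ 2)
      = 1 - (a ^ 2 + 4 * b ^ 2) * μ ^ 2 / ((a ^ 2 + 2 * c ^ 2) * μ ^ 2) := by
        rw [mul_div_mul_right _ _ hμ.ne', one_sub_div hD.ne']; ring
    _ ≤ 1 - (a * γ - 2 * b * μ) ^ 2 / (a ^ 2 * μ ^ 2 + 2 * c ^ 2 * μ ^ 2) := by
        rw [← add_mul]; gcongr

/-- Algebraic inequality for the stochastic CGE convergence rate: with
`n ≥ 2f + 3r`, `n > f`, and `0 < γ ≤ μ`, the squared margin is bounded and the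
rate parameter is bounded below away from the degenerate regime. -/
theorem stmt14 (n f r : ℕ) (hn : 2 * f + 3 * r ≤ n) (hnf : f < n)
    (μ γ : ℝ) (hγ : 0 < γ) (hγμ : γ ≤ μ) :
    (((n : ℝ) - f) * γ - 2 * ((f : ℝ) + r) * μ) ^ 2 ≤
      (((n : ℝ) - f) ^ 2 + 4 * ((f : ℝ) + r) ^ 2) * μ ^ 2 ∧
    1 - (((n : ℝ) - f) * γ - 2 * ((f : ℝ) + r) * μ) ^ 2 /
        (((n : ℝ) - f) ^ 2 * μ ^ 2 + 2 * ((n : ℝ) - r) ^ 2 * μ ^ 2) ≥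
      2 * ((n : ℝ) + Real.sqrt 2 * f + (Real.sqrt 2 - 1) * r) *
        ((n : ℝ) - Real.sqrt 2 * f - (1 + Real.sqrt 2) * r) /
        (((n : ℝ) - f) ^ 2 + 2 * ((n : ℝ) - r) ^ 2) ∧
    0 < 2 * ((n : ℝ) + Real.sqrt 2 * f + (Real.sqrt 2 - 1) * r) *
        ((n : ℝ) - Real.sqrt 2 * f - (1 + Real.sqrt 2) * r) /
        (((n : ℝ) - f) ^ 2 + 2 * ((n : ℝ) - r) ^ 2) := by
  have hn' : 2 * (f : ℝ) + 3 * r ≤ n := by exact_mod_cast hn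
  have hnf' : (f : ℝ) < n := by exact_mod_cast hnf
  have hf : (0 : ℝ) ≤ f := f.cast_nonneg
  have hr : (0 : ℝ) ≤ r := r.cast_nonneg
  have ha : (0 : ℝ) < n - f := by linarith
  have hD : 0 < ((n : ℝ) - f) ^ 2 + 2 * ((n : ℝ) - r) ^ 2 := by positivity
  rw [two_mul_sqrt_two_factors_eq]
  exact ⟨sq_mul_sub_two_mul_le ha.le (by positivity) hγ.le hγμ,
    one_sub_sq_div_ge ha.le (by positivity) hD hγ hγμ,
    div_pos (two_sq_sub_four_sq_pos (by positivity) (by linarith) (by linarith)) hD⟩
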